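/- arXiv:2510.27299 — 2 statements merged into one kernel-verified Lean document; each statement's English description precedes it below -/
import Mathlib

section
/- Let A be an associative unital K-algebra with a double Poisson bracket ⦃-,-⦄. Then the bracket {x,y} := m(⦃x,y⦄) descends to a Lie algebra structure on A_♮ := A/(K·1 + [A,A]), and for every a ∈ A the adjoint action {π_♮(a), −} on A_♮ is induced by the K-linear derivation {a,−} = m∘⦃a,−⦄ of A. In other words, every double Poisson bracket on A induces an NC Poisson structure on A. -/
open TensorProduct

noncomputable section

universe u v w

/-- The cyclic permutation `ρ : A⊗A⊗A → A⊗A⊗A`, `(x⊗y)⊗z ↦ (z⊗x)⊗y`. -/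
def cyc (K : Type u) [Field K] (A : Type v) [Ring A] [Algebra K A] :
    ((A ⊗[K] A) ⊗[K] A) →ₗ[K] ((A ⊗[K] A) ⊗[K] A) :=
  ((TensorProduct.assoc K A A A).symm.toLinearMap).comp
    ((TensorProduct.comm K (A ⊗[K] A) A).toLinearMap)

/-- A double bracket on the `K`-algebra `A`: a `K`-bilinear map `A × A → A ⊗ A` which is
antisymmetric with respect to the flip and satisfies the Leibniz rule in its second
argument for the outer bimodule structure on `A ⊗ A`. -/
structure DoubleBracket (K : Type u) (A : Type v) [Field K] [Ring A] [Algebra K A] where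
  br : A →ₗ[K] A →ₗ[K] A ⊗[K] A
  antisymm : ∀ x y : A, br y x = - (TensorProduct.comm K A A) (br x y)
  leibniz : ∀ x a b : A, br x (a * b)
      = (TensorProduct.map (LinearMap.mulLeft K a) (LinearMap.id : A →ₗ[K] A)) (br x b)
        + (TensorProduct.map (LinearMap.id : A →ₗ[K] A) (LinearMap.mulRight K b)) (br x a)

/-- The double Jacobi identity: a double bracket is a double Poisson bracket iff it holds. -/
def DoubleBracket.IsPoisson {K : Type u} {A : Type v} [Field K] [Ring A] [Algebra K A]
    (D : DoubleBracket K A) : Prop :=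
  ∀ x y z : A,
    (LinearMap.rTensor A (D.br x)) (D.br y z)
      + cyc K A ((LinearMap.rTensor A (D.br y)) (D.br z x))
      + cyc K A (cyc K A ((LinearMap.rTensor A (D.br z)) (D.br x y))) = 0

/-- The associated bracket `{x,y} = m(⦃x,y⦄)`. -/
def DoubleBracket.ab {K : Type u} {A : Type v} [Field K] [Ring A] [Algebra K A]
    (D : DoubleBracket K A) (x y : A) : A :=
  LinearMap.mul' K A (D.br x y)

/-- `[A,A]`: the `K`-linear span of all commutators. -/
def commSpan (K : Type u) [Field K] (A : Type v) [Ring A] [Algebra K A] : Submodule K A :=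
  Submodule.span K {z : A | ∃ u v : A, z = u * v - v * u}

/-- `K·1 + [A,A]`. -/
def natSub (K : Type u) [Field K] (A : Type v) [Ring A] [Algebra K A] : Submodule K A :=
  Submodule.span K {(1 : A)} ⊔ commSpan K A

namespace DoubleBracket

variable {K : Type u} [Field K] {A : Type v} [Ring A] [Algebra K A] (D : DoubleBracket K A)

lemma br_one (x : A) : D.br x 1 = 0 := by
  have h := D.leibniz x 1 1
  simp only [one_mul, LinearMap.mulLeft_one, LinearMap.mulRight_one, TensorProduct.map_id,
    LinearMap.id_apply] at h
  exact left_eq_add.mp h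

lemma one_br (x : A) : D.br 1 x = 0 := by
  rw [D.antisymm x 1, D.br_one, map_zero, neg_zero]

lemma mul'_map_left (x : A) (w : A ⊗[K] A) :
    LinearMap.mul' K A (TensorProduct.map (LinearMap.mulLeft K x)
      (LinearMap.id : A →ₗ[K] A) w) = x * LinearMap.mul' K A w := by
  induction w using TensorProduct.induction_on with
  | zero => simp
  | tmul u v => simp [mul_assoc]
  | add a b ha hb => simp [ha, hb, mul_add]

lemma mul'_map_right (y : A) (w : A ⊗[K] A) :
    LinearMap.mul' K A (TensorProduct.map (LinearMap.id : A →ₗ[K] A)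
      (LinearMap.mulRight K y) w) = LinearMap.mul' K A w * y := by
  induction w using TensorProduct.induction_on with
  | zero => simp
  | tmul u v => simp [mul_assoc]
  | add a b ha hb => simp [ha, hb, add_mul]

lemma ab_mul (a x y : A) : D.ab a (x * y) = D.ab a x * y + x * D.ab a y := by
  show LinearMap.mul' K A (D.br a (x * y)) = _
  rw [D.leibniz, map_add, mul'_map_left, mul'_map_right]
  exact add_comm _ _

lemma ab_add (a : A) (s t : A) : D.ab a (s + t) = D.ab a s + D.ab a t := by
  simp [DoubleBracket.ab]


lemma comm_mem_commSpan (u v : A) : u * v - v * u ∈ commSpan K A :=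
  Submodule.subset_span ⟨u, v, rfl⟩

lemma mem_natSub_of_commSpan {x : A} (h : x ∈ commSpan K A) : x ∈ natSub K A :=
  Submodule.mem_sup_right h

lemma mul'_comm_sub (w : A ⊗[K] A) :
    LinearMap.mul' K A ((TensorProduct.comm K A A) w) - LinearMap.mul' K A w
      ∈ commSpan K A := by
  induction w using TensorProduct.induction_on with
  | zero => simp
  | tmul u v => simpa using comm_mem_commSpan (K := K) v u
  | add a b ha hb => simpa [add_sub_add_comm] using add_mem ha hb

lemma pi_eq_of_sub_mem {a b : A} (h : a - b ∈ natSub K A) :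
    (natSub K A).mkQ a = (natSub K A).mkQ b := by
  rw [Submodule.mkQ_apply, Submodule.mkQ_apply, Submodule.Quotient.eq]
  exact h

lemma pi_mul'_comm (w : A ⊗[K] A) :
    (natSub K A).mkQ (LinearMap.mul' K A ((TensorProduct.comm K A A) w))
      = (natSub K A).mkQ (LinearMap.mul' K A w) :=
  pi_eq_of_sub_mem (mem_natSub_of_commSpan (mul'_comm_sub w))

lemma pi_ab_antisymm (x y : A) :
    (natSub K A).mkQ (D.ab y x) = - (natSub K A).mkQ (D.ab x y) := by
  have h : D.ab y x = - LinearMap.mul' K A ((TensorProduct.comm K A A) (D.br x y)) := by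
    show LinearMap.mul' K A (D.br y x) = _
    rw [D.antisymm, map_neg]
  rw [h, map_neg, pi_mul'_comm]
  rfl

lemma ab_mem (a : A) {n : A} (hn : n ∈ natSub K A) : D.ab a n ∈ natSub K A := by
  have hle : natSub K A ≤ (natSub K A).comap ((LinearMap.mul' K A) ∘ₗ D.br a) := by
    rw [natSub]
    apply sup_le
    · rw [Submodule.span_le]
      intro z hz
      rw [Set.mem_singleton_iff] at hz
      subst hz
      simp [Submodule.mem_comap, D.br_one]
    · rw [commSpan, Submodule.span_le]
      rintro z ⟨u, v, rfl⟩
      simp only [Submodule.mem_comap, LinearMap.comp_apply, map_sub, SetLike.mem_coe]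
      have e1 : LinearMap.mul' K A (D.br a (u * v)) = D.ab a (u * v) := rfl
      have e2 : LinearMap.mul' K A (D.br a (v * u)) = D.ab a (v * u) := rfl
      rw [e1, e2, D.ab_mul, D.ab_mul]
      have : D.ab a u * v + u * D.ab a v - (D.ab a v * u + v * D.ab a u)
          = (u * D.ab a v - D.ab a v * u) + (D.ab a u * v - v * D.ab a u) := by abel
      rw [this]
      exact mem_natSub_of_commSpan
        (add_mem (comm_mem_commSpan u (D.ab a v)) (comm_mem_commSpan (D.ab a u) v))
  exact hle hn


def phi (K : Type u) [Field K] (A : Type v) [Ring A] [Algebra K A] :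
    (A ⊗[K] A) ⊗[K] A →ₗ[K] A :=
  (LinearMap.mul' K A).comp (LinearMap.rTensor A (LinearMap.mul' K A))

lemma phi_tmul (u v z : A) : phi K A ((u ⊗ₜ[K] v) ⊗ₜ[K] z) = u * v * z := by
  simp [phi]

lemma cyc_tmul (u v z : A) :
    cyc K A ((u ⊗ₜ[K] v) ⊗ₜ[K] z) = (z ⊗ₜ[K] u) ⊗ₜ[K] v := by
  simp [cyc]

lemma phi_cyc_sub (w : (A ⊗[K] A) ⊗[K] A) :
    phi K A (cyc K A w) - phi K A w ∈ commSpan K A := by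
  induction w using TensorProduct.induction_on with
  | zero => simp
  | tmul t z =>
    induction t using TensorProduct.induction_on with
    | zero => simp
    | tmul u v =>
      rw [cyc_tmul, phi_tmul, phi_tmul, mul_assoc z u v]
      exact comm_mem_commSpan (K := K) z (u * v)
    | add s t hs ht =>
      rw [TensorProduct.add_tmul, map_add, map_add, map_add]
      simpa [add_sub_add_comm] using add_mem hs ht
  | add a b ha hb =>
    rw [map_add, map_add, map_add]
    simpa [add_sub_add_comm] using add_mem ha hb

lemma pi_phi_cyc (w : (A ⊗[K] A) ⊗[K] A) :
    (natSub K A).mkQ (phi K A (cyc K A w)) = (natSub K A).mkQ (phi K A w) :=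
  pi_eq_of_sub_mem (mem_natSub_of_commSpan (phi_cyc_sub w))

lemma ab_mul' (x : A) (w : A ⊗[K] A) :
    D.ab x (LinearMap.mul' K A w)
      = LinearMap.mul' K A
          (LinearMap.rTensor A ((LinearMap.mul' K A) ∘ₗ D.br x) w)
        + LinearMap.mul' K A
          (LinearMap.lTensor A ((LinearMap.mul' K A) ∘ₗ D.br x) w) := by
  induction w using TensorProduct.induction_on with
  | zero => simp [DoubleBracket.ab]
  | tmul u v =>
    rw [LinearMap.mul'_apply, D.ab_mul]
    simp [DoubleBracket.ab]
  | add a b ha hb =>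
    simp only [map_add]
    rw [D.ab_add, ha, hb]
    abel

lemma mul'_lTensor (f : A →ₗ[K] A) (w : A ⊗[K] A) :
    LinearMap.mul' K A (LinearMap.lTensor A f w)
      = LinearMap.mul' K A ((TensorProduct.comm K A A)
          (LinearMap.rTensor A f ((TensorProduct.comm K A A) w))) := by
  induction w using TensorProduct.induction_on with
  | zero => simp
  | tmul u v => simp
  | add a b ha hb => simp [ha, hb]


lemma mul'_rT_br (x : A) (w : A ⊗[K] A) :
    LinearMap.mul' K A (LinearMap.rTensor A ((LinearMap.mul' K A) ∘ₗ D.br x) w)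
      = phi K A (LinearMap.rTensor A (D.br x) w) := by
  rw [LinearMap.rTensor_comp, phi]
  simp [LinearMap.comp_apply]

lemma key (x y z : A) :
    (natSub K A).mkQ (D.ab x (D.ab y z))
      = (natSub K A).mkQ (phi K A (LinearMap.rTensor A (D.br x) (D.br y z)))
        - (natSub K A).mkQ (phi K A (LinearMap.rTensor A (D.br x) (D.br z y))) := by
  have h0 : D.ab y z = LinearMap.mul' K A (D.br y z) := rfl
  rw [h0, D.ab_mul' x (D.br y z), map_add, D.mul'_rT_br, mul'_lTensor, pi_mul'_comm,
    D.mul'_rT_br]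
  have hcw : (TensorProduct.comm K A A) (D.br y z) = - D.br z y := by
    rw [D.antisymm y z, neg_neg]
  rw [hcw, map_neg, map_neg, map_neg, sub_eq_add_neg]


lemma cyclic (hD : D.IsPoisson) (x y z : A) :
    (natSub K A).mkQ (phi K A (LinearMap.rTensor A (D.br x) (D.br y z)))
      + (natSub K A).mkQ (phi K A (LinearMap.rTensor A (D.br y) (D.br z x)))
      + (natSub K A).mkQ (phi K A (LinearMap.rTensor A (D.br z) (D.br x y))) = 0 := by
  have h := congrArg (fun t => (natSub K A).mkQ (phi K A t)) (hD x y z)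
  simp only [map_add, map_zero] at h
  rw [pi_phi_cyc, pi_phi_cyc, pi_phi_cyc] at h
  exact h

lemma jacobi_rep (hD : D.IsPoisson) (x y z : A) :
    (natSub K A).mkQ (D.ab x (D.ab y z))
      + (natSub K A).mkQ (D.ab z (D.ab x y))
      + (natSub K A).mkQ (D.ab y (D.ab z x)) = 0 := by
  rw [D.key x y z, D.key z x y, D.key y z x]
  have h1 := D.cyclic hD x y z
  have h2 := D.cyclic hD x z y
  have h3 :
      ((natSub K A).mkQ (phi K A (LinearMap.rTensor A (D.br x) (D.br y z)))
          - (natSub K A).mkQ (phi K A (LinearMap.rTensor A (D.br x) (D.br z y))))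
        + ((natSub K A).mkQ (phi K A (LinearMap.rTensor A (D.br z) (D.br x y)))
          - (natSub K A).mkQ (phi K A (LinearMap.rTensor A (D.br z) (D.br y x))))
        + ((natSub K A).mkQ (phi K A (LinearMap.rTensor A (D.br y) (D.br z x)))
          - (natSub K A).mkQ (phi K A (LinearMap.rTensor A (D.br y) (D.br x z))))
      = ((natSub K A).mkQ (phi K A (LinearMap.rTensor A (D.br x) (D.br y z)))
          + (natSub K A).mkQ (phi K A (LinearMap.rTensor A (D.br y) (D.br z x)))
          + (natSub K A).mkQ (phi K A (LinearMap.rTensor A (D.br z) (D.br x y))))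
        - ((natSub K A).mkQ (phi K A (LinearMap.rTensor A (D.br x) (D.br z y)))
          + (natSub K A).mkQ (phi K A (LinearMap.rTensor A (D.br z) (D.br y x)))
          + (natSub K A).mkQ (phi K A (LinearMap.rTensor A (D.br y) (D.br x z)))) := by
    abel
  rw [h3, h1, h2, sub_zero]

end DoubleBracket

/-- A double Poisson bracket on `A` induces an NC Poisson structure on `A`:
the bracket `{x,y} = m⦃x,y⦄` descends to a Lie algebra structure on
`A_♮ = A/(K·1 + [A,A])`, and for every `a ∈ A` the adjoint action of `π_♮ a` is induced by
the `K`-linear derivation `{a,−} = m∘⦃a,−⦄` of `A`. -/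
theorem statement_3 (K : Type u) [Field K] [CharZero K] (A : Type v) [Ring A] [Algebra K A]
    (D : DoubleBracket K A) (hD : D.IsPoisson) :
    ∃ L : (A ⧸ natSub K A) →ₗ[K] (A ⧸ natSub K A) →ₗ[K] (A ⧸ natSub K A),
      (∀ α β, L α β = - L β α)
      ∧ (∀ α β γ, L α (L β γ) = L (L α β) γ + L β (L α γ))
      ∧ (∀ a x : A, L ((natSub K A).mkQ a) ((natSub K A).mkQ x) = (natSub K A).mkQ (D.ab a x))
      ∧ (∀ a x y : A, D.ab a (x * y) = D.ab a x * y + x * D.ab a y) := by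
  classical
  set B : A →ₗ[K] A →ₗ[K] A ⧸ natSub K A :=
    D.br.compr₂ ((natSub K A).mkQ ∘ₗ LinearMap.mul' K A) with hBdef
  have hB : ∀ a x : A, B a x = (natSub K A).mkQ (D.ab a x) := fun a x => rfl
  have h2 : ∀ a : A, natSub K A ≤ LinearMap.ker (B a) := by
    intro a n hn
    rw [LinearMap.mem_ker, hB, Submodule.mkQ_apply, Submodule.Quotient.mk_eq_zero]
    exact D.ab_mem a hn
  set L1 : A →ₗ[K] (A ⧸ natSub K A) →ₗ[K] (A ⧸ natSub K A) :=
    { toFun := fun a => (natSub K A).liftQ (B a) (h2 a)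
      map_add' := by
        intro a b
        refine Submodule.linearMap_qext _ ?_
        ext x
        simp only [LinearMap.comp_apply, Submodule.mkQ_apply, Submodule.liftQ_apply,
          LinearMap.add_apply, map_add]
      map_smul' := by
        intro c a
        refine Submodule.linearMap_qext _ ?_
        ext x
        simp only [LinearMap.comp_apply, Submodule.mkQ_apply, Submodule.liftQ_apply,
          LinearMap.smul_apply, map_smul, RingHom.id_apply] } with hL1def
  have h3 : natSub K A ≤ LinearMap.ker L1 := by
    intro n hn
    rw [LinearMap.mem_ker]
    refine Submodule.linearMap_qext _ ?_
    ext x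
    have : (L1 n) ((natSub K A).mkQ x) = (natSub K A).mkQ (D.ab n x) := by
      simp only [hL1def, LinearMap.coe_mk, AddHom.coe_mk, Submodule.mkQ_apply,
        Submodule.liftQ_apply]
      exact hB n x
    simp only [LinearMap.comp_apply, LinearMap.zero_comp, LinearMap.zero_apply, this]
    rw [D.pi_ab_antisymm x n, neg_eq_zero, Submodule.mkQ_apply,
      Submodule.Quotient.mk_eq_zero]
    exact D.ab_mem x hn
  set L : (A ⧸ natSub K A) →ₗ[K] (A ⧸ natSub K A) →ₗ[K] (A ⧸ natSub K A) :=
    (natSub K A).liftQ L1 h3 with hLdef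
  have hL : ∀ a x : A,
      L ((natSub K A).mkQ a) ((natSub K A).mkQ x) = (natSub K A).mkQ (D.ab a x) := by
    intro a x
    simp only [hLdef, hL1def, Submodule.mkQ_apply, Submodule.liftQ_apply,
      LinearMap.coe_mk, AddHom.coe_mk]
    exact hB a x
  refine ⟨L, ?_, ?_, hL, D.ab_mul⟩
  · intro α β
    obtain ⟨a, rfl⟩ := Submodule.mkQ_surjective _ α
    obtain ⟨b, rfl⟩ := Submodule.mkQ_surjective _ β
    rw [hL, hL]
    exact D.pi_ab_antisymm b a
  · intro α β γ
    obtain ⟨x, rfl⟩ := Submodule.mkQ_surjective _ α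
    obtain ⟨y, rfl⟩ := Submodule.mkQ_surjective _ β
    obtain ⟨z, rfl⟩ := Submodule.mkQ_surjective _ γ
    rw [hL y z, hL x z, hL x y, hL x (D.ab y z), hL (D.ab x y) z, hL y (D.ab x z)]
    -- goal : π (ab x (ab y z)) = π (ab (ab x y) z) + π (ab y (ab x z))
    have e1 : (natSub K A).mkQ (D.ab (D.ab x y) z)
        = - (natSub K A).mkQ (D.ab z (D.ab x y)) := by
      rw [D.pi_ab_antisymm z (D.ab x y)]
    have hmem : D.ab x z + D.ab z x ∈ natSub K A := by
      have hzx : D.ab z x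
          = - LinearMap.mul' K A ((TensorProduct.comm K A A) (D.br x z)) := by
        show LinearMap.mul' K A (D.br z x) = _
        rw [D.antisymm, map_neg]
      rw [hzx]
      have := DoubleBracket.mem_natSub_of_commSpan
        (neg_mem (DoubleBracket.mul'_comm_sub (K := K) (D.br x z)))
      simpa [sub_eq_add_neg, neg_sub, DoubleBracket.ab] using this
    have e2 : (natSub K A).mkQ (D.ab y (D.ab x z))
        = - (natSub K A).mkQ (D.ab y (D.ab z x)) := by
      have h0 : (natSub K A).mkQ (D.ab y (D.ab x z + D.ab z x)) = 0 := by
        rw [Submodule.mkQ_apply, Submodule.Quotient.mk_eq_zero]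
        exact D.ab_mem y hmem
      rw [D.ab_add, map_add] at h0
      exact eq_neg_of_add_eq_zero_left h0
    rw [e1, e2]
    have hj := D.jacobi_rep hD x y z
    have : (natSub K A).mkQ (D.ab x (D.ab y z))
        = - ((natSub K A).mkQ (D.ab z (D.ab x y))
            + (natSub K A).mkQ (D.ab y (D.ab z x))) := by
      rw [add_assoc] at hj
      exact eq_neg_of_add_eq_zero_left hj
    rw [this, neg_add]
end
end

section
/- Let (A, ⦃-,-⦄) be a double Poisson algebra and n a positive integer. Let Aₙ be a commutative K-algebra corepresenting the functor C ↦ Hom_{Alg_K}(A, Mₙ(C)) on commutative K-algebras, with natural bijections Ψ_C : Hom_{Alg_K}(Aₙ, C) → Hom_{Alg_K}(A, Mₙ(C)), let u := Ψ_{Aₙ}(id_{Aₙ}) : A → Mₙ(Aₙ) be the universal representation, and write a_{ij} := (u(a))_{ij} ∈ Aₙ for a ∈ A and 1 ≤ i,j ≤ n. Then: (a) Aₙ is generated as a K-algebra by the elements {a_{ij} : a ∈ A, 1 ≤ i,j ≤ n}; (b) there exists a unique Poisson bracket {-,-} on Aₙ (a K-bilinear antisymmetric bracket satisfying the Jacobi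 identity and the Leibniz rule {x, yz} = {x,y}z + y{x,z}) such that for all a, b ∈ A and all 1 ≤ i,j,u,v ≤ n, {a_{ij}, b_{uv}} = T_{u,j,i,v}(⦃a,b⦄), where T_{u,j,i,v} : A⊗A → Aₙ is the K-linear map determined by p⊗q ↦ (u(p))_{uj}·(u(q))_{iv}. -/
open TensorProduct

noncomputable section

universe u v w

/-!
Write `U = univRep Ψ` for the universal representation and `a_ij = U a i j`. Corestricting `U`
to matrices over the subalgebra generated by the `a_ij`, the universal property produces a
section of the inclusion of that subalgebra, so the `a_ij` generate `Aₙ`.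

Derivations of `Aₙ` also come from the universal property: if `δ : A → Mₙ(M)` satisfies
`δ(ab) = U(a)δ(b) + δ(a)U(b)`, then `a ↦ U(a) + εδ(a)` is an algebra map `A → Mₙ(Aₙ ⊕ εM)`,
and the `ε`-part of the corresponding `Aₙ → Aₙ ⊕ εM` is a derivation sending `a_ij` to
`δ(a)_ij`. With `M = Aₙ` and `δ(b)_uv = T_{u,j,i,v}(⦃a,b⦄)` this gives the derivations
`{a_ij, -}`; these satisfy the same rule in `a`, so with `M = Der(Aₙ)` it gives a biderivation
`{-,-}` with the prescribed values. A biderivation is determined by its values on generators,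
and its antisymmetry and (the cyclic Jacobiator being a derivation in each argument) its Jacobi
identity only need to be checked on the `a_ij`. There they follow from the antisymmetry of
`⦃-,-⦄` and from the double Jacobi identity for the triples `(a,b,c)` and `(c,b,a)`.
-/

section Biderivation

variable {K R : Type*} [CommRing K] [CommRing R] [Algebra K R] {s : Set R}

namespace LinearMap

theorem eq_of_leibniz_of_adjoin_eq_top (hs : Algebra.adjoin K s = ⊤) {f g : R →ₗ[K] R}
    (hf : ∀ x y, f (x * y) = f x * y + x * f y) (hg : ∀ x y, g (x * y) = g x * y + x * g y)
    (h : Set.EqOn f g s) : f = g := by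
  let toDerivation (f : R →ₗ[K] R) (hf : ∀ x y, f (x * y) = f x * y + x * f y) :
      Derivation K R R :=
    Derivation.mk' f fun x y => by rw [hf, smul_eq_mul, smul_eq_mul]; ring
  exact congrArg Derivation.toLinearMap
    (Derivation.ext_of_adjoin_eq_top (D1 := toDerivation f hf) (D2 := toDerivation g hg) s hs h)

theorem ext_of_leibniz_of_adjoin_eq_top (hs : Algebra.adjoin K s = ⊤)
    {P Q : R →ₗ[K] R →ₗ[K] R}
    (hPl : ∀ x y z, P (x * y) z = P x z * y + x * P y z)
    (hPr : ∀ x y z, P x (y * z) = P x y * z + y * P x z)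
    (hQl : ∀ x y z, Q (x * y) z = Q x z * y + x * Q y z)
    (hQr : ∀ x y z, Q x (y * z) = Q x y * z + y * Q x z)
    (h : ∀ x ∈ s, ∀ y ∈ s, P x y = Q x y) : P = Q := by
  have hgen (x : R) (hx : x ∈ s) : P x = Q x :=
    eq_of_leibniz_of_adjoin_eq_top hs (hPr x) (hQr x) (h x hx)
  ext x y
  exact LinearMap.congr_fun (eq_of_leibniz_of_adjoin_eq_top (f := P.flip y) (g := Q.flip y) hs
    (fun x z => hPl x z y) (fun x z => hQl x z y) (fun z hz => by simp [hgen z hz])) x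

theorem leibniz_left_of_antisymm {P : R →ₗ[K] R →ₗ[K] R} (hanti : ∀ x y, P x y = -P y x)
    (hr : ∀ x y z, P x (y * z) = P x y * z + y * P x z) (x y z : R) :
    P (x * y) z = P x z * y + x * P y z := by
  rw [hanti, hr, hanti z x, hanti z y]
  ring

theorem antisymm_of_adjoin_eq_top (hs : Algebra.adjoin K s = ⊤) {P : R →ₗ[K] R →ₗ[K] R}
    (hl : ∀ x y z, P (x * y) z = P x z * y + x * P y z)
    (hr : ∀ x y z, P x (y * z) = P x y * z + y * P x z)
    (h : ∀ x ∈ s, ∀ y ∈ s, P x y = -P y x) (x y : R) : P x y = -P y x := by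
  have hP : P = -P.flip := ext_of_leibniz_of_adjoin_eq_top hs hl hr
    (fun x y z => by simp only [neg_apply, flip_apply, hr]; ring)
    (fun x y z => by simp only [neg_apply, flip_apply, hl]; ring) h
  exact LinearMap.congr_fun₂ hP x y

def cyclicJacobiator (P : R →ₗ[K] R →ₗ[K] R) (x y : R) : R →ₗ[K] R :=
  (P x).comp (P y) + (P y).comp (P.flip x) + P.flip (P x y)

theorem cyclicJacobiator_apply (P : R →ₗ[K] R →ₗ[K] R) (x y z : R) :
    P.cyclicJacobiator x y z = P x (P y z) + P y (P z x) + P z (P x y) :=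
  rfl

theorem cyclicJacobiator_rotate (P : R →ₗ[K] R →ₗ[K] R) (x y z : R) :
    P.cyclicJacobiator x y z = P.cyclicJacobiator y z x := by
  simp only [cyclicJacobiator_apply]
  abel

theorem cyclicJacobiator_mul {P : R →ₗ[K] R →ₗ[K] R} (hanti : ∀ x y, P x y = -P y x)
    (hr : ∀ x y z, P x (y * z) = P x y * z + y * P x z) (x y z w : R) :
    P.cyclicJacobiator x y (z * w)
      = P.cyclicJacobiator x y z * w + z * P.cyclicJacobiator x y w := by
  simp only [cyclicJacobiator_apply, hr, map_add, leibniz_left_of_antisymm hanti hr]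
  rw [hanti w x, hanti z x]
  ring

theorem jacobi_of_adjoin_eq_top (hs : Algebra.adjoin K s = ⊤) {P : R →ₗ[K] R →ₗ[K] R}
    (hanti : ∀ x y, P x y = -P y x) (hr : ∀ x y z, P x (y * z) = P x y * z + y * P x z)
    (h : ∀ x ∈ s, ∀ y ∈ s, ∀ z ∈ s, P x (P y z) + P y (P z x) + P z (P x y) = 0)
    (x y z : R) : P x (P y z) = P (P x y) z + P y (P x z) := by
  have eq_zero {x y : R} (hxy : Set.EqOn (P.cyclicJacobiator x y) 0 s) :
      P.cyclicJacobiator x y = 0 :=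
    eq_of_leibniz_of_adjoin_eq_top hs (cyclicJacobiator_mul hanti hr x y) (by simp) hxy
  -- Rotating the arguments frees them from `s` one at a time.
  have zero_of_mem_mem (x y : R) (hx : x ∈ s) (hy : y ∈ s) : P.cyclicJacobiator x y = 0 :=
    eq_zero fun z hz => h x hx y hy z hz
  have zero_of_mem (x y : R) (hy : y ∈ s) : P.cyclicJacobiator x y = 0 :=
    eq_zero fun z hz => by rw [cyclicJacobiator_rotate, zero_of_mem_mem y z hy hz]; rfl
  have hxyz : P.cyclicJacobiator x y z = 0 := by
    rw [eq_zero fun w hw => by rw [cyclicJacobiator_rotate, zero_of_mem y w hw]; rfl]; rfl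
  rw [cyclicJacobiator_apply, hanti z x, hanti z (P x y), map_neg] at hxyz
  linear_combination hxyz

end LinearMap

end Biderivation

section TrivSqZeroExtMatrix

variable {K R M A ι : Type*} [CommRing K] [CommRing R] [Algebra K R] [AddCommGroup M]
  [Module R M] [Module K M] [Semiring A] [Algebra K A] [Fintype ι] [DecidableEq ι]

-- Entrywise form of `δ (a * b) = U a * δ b + δ a * U b`, for the `Mₙ(R)`-bimodule `Mₙ(M)`.
def IsDerivationAlong (U : A →ₐ[K] Matrix ι ι R) (δ : A →ₗ[K] Matrix ι ι M) : Prop :=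
  ∀ a b i j, δ (a * b) i j = ∑ k, (U a i k • δ b k j + U b k j • δ a i k)

namespace IsDerivationAlong

variable {U : A →ₐ[K] Matrix ι ι R} {δ : A →ₗ[K] Matrix ι ι M}

theorem map_one (hδ : IsDerivationAlong U δ) : δ 1 = 0 := by
  ext i j
  have h := hδ 1 1 i j
  simp only [mul_one, _root_.map_one, Matrix.one_apply, ite_smul, one_smul, zero_smul,
    Finset.sum_add_distrib, Finset.sum_ite_eq, Finset.sum_ite_eq', Finset.mem_univ, ↓reduceIte,
    left_eq_add] at h
  exact h

variable [Module Rᵐᵒᵖ M] [IsCentralScalar R M] [IsScalarTower K R M]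

def toMatrixTrivSqZeroExt (hδ : IsDerivationAlong U δ) :
    A →ₐ[K] Matrix ι ι (TrivSqZeroExt R M) :=
  AlgHom.ofLinearMap
    { toFun := fun a => Matrix.of fun i j =>
        TrivSqZeroExt.inl (U a i j) + TrivSqZeroExt.inr (δ a i j)
      map_add' := fun a b => by
        ext i j <;> simp [add_add_add_comm]
      map_smul' := fun c a => by
        ext i j <;> simp }
    (by ext i j <;> by_cases h : i = j <;> simp [Matrix.one_apply, h, hδ.map_one])
    (fun a b => by
      ext i j
      · simp [Matrix.mul_apply, TrivSqZeroExt.fst_sum]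
      · simp [Matrix.mul_apply, TrivSqZeroExt.snd_sum, hδ a b i j, Finset.sum_add_distrib])

@[simp]
theorem toMatrixTrivSqZeroExt_apply (hδ : IsDerivationAlong U δ) (a : A) (i j : ι) :
    hδ.toMatrixTrivSqZeroExt a i j = TrivSqZeroExt.inl (U a i j) + TrivSqZeroExt.inr (δ a i j) :=
  rfl

end IsDerivationAlong

variable [Module Rᵐᵒᵖ M] [IsCentralScalar R M] [IsScalarTower K R M]

def Derivation.ofTrivSqZeroExt (g : R →ₐ[K] TrivSqZeroExt R M) (hg : ∀ x, (g x).fst = x) :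
    Derivation K R M :=
  Derivation.mk'
    { toFun := fun x => (g x).snd
      map_add' := fun x y => by simp
      map_smul' := fun c x => by simp }
    (fun x y => by simp [hg, add_comm])

end TrivSqZeroExtMatrix

section Corepresentation

variable {K : Type u} [CommRing K] {A : Type v} [Semiring A] [Algebra K A]
  {ι : Type*} [Fintype ι] [DecidableEq ι] {An : Type v} [CommRing An] [Algebra K An]

def univRep (Ψ : ∀ (C : Type v) [CommRing C] [Algebra K C],
    (An →ₐ[K] C) ≃ (A →ₐ[K] Matrix ι ι C)) : A →ₐ[K] Matrix ι ι An :=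
  Ψ An (AlgHom.id K An)

def IsNaturalRepEquiv (Ψ : ∀ (C : Type v) [CommRing C] [Algebra K C],
    (An →ₐ[K] C) ≃ (A →ₐ[K] Matrix ι ι C)) : Prop :=
  ∀ (C : Type v) [CommRing C] [Algebra K C] (C' : Type v) [CommRing C'] [Algebra K C']
    (h : C →ₐ[K] C') (g : An →ₐ[K] C), Ψ C' (h.comp g) = (AlgHom.mapMatrix h).comp (Ψ C g)

def univRepEntries (Ψ : ∀ (C : Type v) [CommRing C] [Algebra K C],
    (An →ₐ[K] C) ≃ (A →ₐ[K] Matrix ι ι C)) : Set An :=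
  {x | ∃ (a : A) (i j : ι), x = univRep Ψ a i j}

variable {Ψ : ∀ (C : Type v) [CommRing C] [Algebra K C],
    (An →ₐ[K] C) ≃ (A →ₐ[K] Matrix ι ι C)}

namespace IsNaturalRepEquiv

theorem mapMatrix_comp_univRep (hΨ : IsNaturalRepEquiv Ψ) {C : Type v} [CommRing C]
    [Algebra K C] (g : An →ₐ[K] C) : (AlgHom.mapMatrix g).comp (univRep Ψ) = Ψ C g := by
  have h := hΨ An C g (AlgHom.id K An)
  rw [AlgHom.comp_id] at h
  exact h.symm

theorem symm_apply_univRep (hΨ : IsNaturalRepEquiv Ψ) {C : Type v} [CommRing C]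
    [Algebra K C] (φ : A →ₐ[K] Matrix ι ι C) (a : A) (i j : ι) :
    (Ψ C).symm φ (univRep Ψ a i j) = φ a i j := by
  conv_rhs => rw [← (Ψ C).apply_symm_apply φ, ← hΨ.mapMatrix_comp_univRep]
  rfl

theorem comp_symm_eq_id (hΨ : IsNaturalRepEquiv Ψ) {C : Type v} [CommRing C] [Algebra K C]
    (h : C →ₐ[K] An) (φ : A →ₐ[K] Matrix ι ι C)
    (hφ : (AlgHom.mapMatrix h).comp φ = univRep Ψ) :
    h.comp ((Ψ C).symm φ) = AlgHom.id K An :=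
  (Ψ An).injective (by rw [hΨ, Equiv.apply_symm_apply, hφ]; rfl)

theorem adjoin_univRepEntries (hΨ : IsNaturalRepEquiv Ψ) :
    Algebra.adjoin K (univRepEntries Ψ) = ⊤ := by
  set B := Algebra.adjoin K (univRepEntries Ψ)
  have hmem (a : A) (i j : ι) : univRep Ψ a i j ∈ B := Algebra.subset_adjoin ⟨a, i, j, rfl⟩
  let f : Matrix ι ι B →ₐ[K] Matrix ι ι An := AlgHom.mapMatrix B.val
  have hf : Function.Injective f := Matrix.map_injective Subtype.val_injective
  let φ : A →ₐ[K] Matrix ι ι B := (AlgEquiv.ofInjective f hf).symm.toAlgHom.comp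
    ((univRep Ψ).codRestrict f.range fun a => ⟨Matrix.of fun i j => ⟨_, hmem a i j⟩, rfl⟩)
  have hφ : f.comp φ = univRep Ψ := by
    ext a : 1
    exact congrArg Subtype.val ((AlgEquiv.ofInjective f hf).apply_symm_apply _)
  have hsec := hΨ.comp_symm_eq_id B.val φ hφ
  refine eq_top_iff.2 fun x _ => ?_
  have hx : B.val ((Ψ B).symm φ x) = x := AlgHom.congr_fun hsec x
  exact hx ▸ Subtype.mem _

variable {M : Type v} [AddCommGroup M] [Module An M] [Module K M] [Module Anᵐᵒᵖ M]
  [IsCentralScalar An M] [IsScalarTower K An M]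

def liftDerivation (hΨ : IsNaturalRepEquiv Ψ) (δ : A →ₗ[K] Matrix ι ι M)
    (hδ : IsDerivationAlong (univRep Ψ) δ) : Derivation K An M :=
  Derivation.ofTrivSqZeroExt ((Ψ _).symm hδ.toMatrixTrivSqZeroExt) fun x =>
    AlgHom.congr_fun (hΨ.comp_symm_eq_id (TrivSqZeroExt.fstHom K An M) _ (by ext; simp)) x

@[simp]
theorem liftDerivation_univRep (hΨ : IsNaturalRepEquiv Ψ) (δ : A →ₗ[K] Matrix ι ι M)
    (hδ : IsDerivationAlong (univRep Ψ) δ) (a : A) (i j : ι) :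
    hΨ.liftDerivation δ hδ (univRep Ψ a i j) = δ a i j := by
  change ((Ψ _).symm hδ.toMatrixTrivSqZeroExt (univRep Ψ a i j)).snd = δ a i j
  simp [hΨ.symm_apply_univRep]

end IsNaturalRepEquiv

end Corepresentation

section TensorEntry

variable {K A R ι : Type*} [CommRing K] [Semiring A] [Algebra K A] [CommRing R] [Algebra K R]
  [Fintype ι] [DecidableEq ι] (U : A →ₐ[K] Matrix ι ι R)

def tensorEntry (i j k l : ι) : A ⊗[K] A →ₗ[K] R :=
  LinearMap.mul' K R ∘ₗ TensorProduct.map (Matrix.entryLinearMap K R i j ∘ₗ U.toLinearMap)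
    (Matrix.entryLinearMap K R k l ∘ₗ U.toLinearMap)

@[simp]
theorem tensorEntry_tmul (i j k l : ι) (p q : A) :
    tensorEntry U i j k l (p ⊗ₜ q) = U p i j * U q k l :=
  rfl

theorem tensorEntry_comm (i j k l : ι) (w : A ⊗[K] A) :
    tensorEntry U i j k l (TensorProduct.comm K A A w) = tensorEntry U k l i j w := by
  induction w using TensorProduct.induction_on with
  | zero => simp
  | tmul p q => simp [mul_comm]
  | add w w' hw hw' => simp [hw, hw']

theorem tensorEntry_map_mulLeft_id (i j k l : ι) (a : A) (w : A ⊗[K] A) :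
    tensorEntry U i j k l (TensorProduct.map (LinearMap.mulLeft K a) LinearMap.id w)
      = ∑ m, U a i m * tensorEntry U m j k l w := by
  induction w using TensorProduct.induction_on with
  | zero => simp
  | tmul p q => simp [Matrix.mul_apply, Finset.sum_mul, mul_assoc]
  | add w w' hw hw' => simp [hw, hw', mul_add, Finset.sum_add_distrib]

theorem tensorEntry_map_mulRight_id (i j k l : ι) (b : A) (w : A ⊗[K] A) :
    tensorEntry U i j k l (TensorProduct.map (LinearMap.mulRight K b) LinearMap.id w)
      = ∑ m, U b m j * tensorEntry U i m k l w := by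
  induction w using TensorProduct.induction_on with
  | zero => simp
  | tmul p q => simp [Matrix.mul_apply, Finset.mul_sum, mul_comm, mul_left_comm]
  | add w w' hw hw' => simp [hw, hw', mul_add, Finset.sum_add_distrib]

theorem tensorEntry_map_id_mulLeft (i j k l : ι) (a : A) (w : A ⊗[K] A) :
    tensorEntry U i j k l (TensorProduct.map LinearMap.id (LinearMap.mulLeft K a) w)
      = ∑ m, U a k m * tensorEntry U i j m l w := by
  induction w using TensorProduct.induction_on with
  | zero => simp
  | tmul p q => simp [Matrix.mul_apply, Finset.mul_sum, mul_left_comm]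
  | add w w' hw hw' => simp [hw, hw', mul_add, Finset.sum_add_distrib]

theorem tensorEntry_map_id_mulRight (i j k l : ι) (b : A) (w : A ⊗[K] A) :
    tensorEntry U i j k l (TensorProduct.map LinearMap.id (LinearMap.mulRight K b) w)
      = ∑ m, U b m l * tensorEntry U i j k m w := by
  induction w using TensorProduct.induction_on with
  | zero => simp
  | tmul p q => simp [Matrix.mul_apply, Finset.mul_sum, mul_comm, mul_left_comm]
  | add w w' hw hw' => simp [hw, hw', mul_add, Finset.sum_add_distrib]

def tensorEntry₃ (i₁ j₁ i₂ j₂ i₃ j₃ : ι) : (A ⊗[K] A) ⊗[K] A →ₗ[K] R :=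
  LinearMap.mul' K R ∘ₗ TensorProduct.map (tensorEntry U i₁ j₁ i₂ j₂)
    (Matrix.entryLinearMap K R i₃ j₃ ∘ₗ U.toLinearMap)

@[simp]
theorem tensorEntry₃_tmul (i₁ j₁ i₂ j₂ i₃ j₃ : ι) (w : A ⊗[K] A) (r : A) :
    tensorEntry₃ U i₁ j₁ i₂ j₂ i₃ j₃ (w ⊗ₜ r)
      = tensorEntry U i₁ j₁ i₂ j₂ w * U r i₃ j₃ :=
  rfl

end TensorEntry

section InducedBracketEntries

variable {K A R ι : Type*} [Field K] [Ring A] [Algebra K A] [CommRing R] [Algebra K R]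
  [Fintype ι] [DecidableEq ι]

theorem tensorEntry₃_cyc (U : A →ₐ[K] Matrix ι ι R) (i₁ j₁ i₂ j₂ i₃ j₃ : ι)
    (X : (A ⊗[K] A) ⊗[K] A) :
    tensorEntry₃ U i₁ j₁ i₂ j₂ i₃ j₃ (cyc K A X)
      = tensorEntry₃ U i₂ j₂ i₃ j₃ i₁ j₁ X :=
  LinearMap.congr_fun (f := tensorEntry₃ U i₁ j₁ i₂ j₂ i₃ j₃ ∘ₗ cyc K A)
    (g := tensorEntry₃ U i₂ j₂ i₃ j₃ i₁ j₁)
    (TensorProduct.ext_threefold fun x y z => by simp [cyc]; ring) X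

namespace DoubleBracket

variable (D : DoubleBracket K A) (U : A →ₐ[K] Matrix ι ι R)

theorem comm_br (x y : A) : TensorProduct.comm K A A (D.br x y) = -D.br y x := by
  rw [D.antisymm x y, neg_neg]

theorem leibniz_left (a b c : A) :
    D.br (a * b) c = TensorProduct.map LinearMap.id (LinearMap.mulLeft K a) (D.br b c)
      + TensorProduct.map (LinearMap.mulRight K b) LinearMap.id (D.br a c) := by
  rw [D.antisymm c (a * b), D.leibniz, D.antisymm c b, D.antisymm c a]
  simp [TensorProduct.map_comm, add_comm]

def entryBracket (a : A) (i j : ι) : A →ₗ[K] Matrix ι ι R :=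
  LinearMap.pi fun u => LinearMap.pi fun v => tensorEntry U u j i v ∘ₗ D.br a

theorem entryBracket_apply (a b : A) (i j u v : ι) :
    D.entryBracket U a i j b u v = tensorEntry U u j i v (D.br a b) :=
  rfl

theorem isDerivationAlong_entryBracket (a : A) (i j : ι) :
    IsDerivationAlong U (D.entryBracket U a i j) := by
  intro b c u v
  simp [entryBracket_apply, D.leibniz, tensorEntry_map_mulLeft_id, tensorEntry_map_id_mulRight,
    Finset.sum_add_distrib]

def IsInducedBracket (P : R →ₗ[K] R →ₗ[K] R) : Prop :=
  ∀ (a b : A) (i j u v : ι), P (U a i j) (U b u v) = tensorEntry U u j i v (D.br a b)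

namespace IsInducedBracket

variable {D U} {P : R →ₗ[K] R →ₗ[K] R}

theorem antisymm (hP : D.IsInducedBracket U P) (a b : A) (i j u v : ι) :
    P (U a i j) (U b u v) = -P (U b u v) (U a i j) := by
  rw [hP, hP, D.antisymm a b, map_neg, tensorEntry_comm, neg_neg]

theorem apply_tensorEntry (hP : D.IsInducedBracket U P)
    (hr : ∀ x y z, P x (y * z) = P x y * z + y * P x z) (a : A) (i j i₂ j₂ i₃ j₃ : ι)
    (w : A ⊗[K] A) :
    P (U a i j) (tensorEntry U i₂ j₂ i₃ j₃ w)
      = tensorEntry₃ U i₂ j i j₂ i₃ j₃ (LinearMap.rTensor A (D.br a) w)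
        + tensorEntry₃ U i₃ j i j₃ i₂ j₂
            (LinearMap.rTensor A (D.br a) (TensorProduct.comm K A A w)) := by
  induction w using TensorProduct.induction_on with
  | zero => simp
  | tmul p q => simp [hr, hP a p, hP a q, mul_comm]
  | add w w' hw hw' => simp only [map_add, hw, hw']; ring

theorem cyclic_jacobi (hP : D.IsInducedBracket U P)
    (hr : ∀ x y z, P x (y * z) = P x y * z + y * P x z) (hD : D.IsPoisson) (a b c : A)
    (i j u v s t : ι) :
    P (U a i j) (P (U b u v) (U c s t)) + P (U b u v) (P (U c s t) (U a i j))
      + P (U c s t) (P (U a i j) (U b u v)) = 0 := by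
  have hJ_abc := congrArg (tensorEntry₃ U s j i v u t) (hD a b c)
  have hJ_cba := congrArg (tensorEntry₃ U i t s v u j) (hD c b a)
  simp only [map_add, map_zero, tensorEntry₃_cyc] at hJ_abc hJ_cba
  simp only [hP b c, hP c a, hP a b, hP.apply_tensorEntry hr, D.comm_br, map_neg]
  linear_combination hJ_abc - hJ_cba

end IsInducedBracket

end DoubleBracket

end InducedBracketEntries

theorem Derivation.sum_apply {R A M ι : Type*} [CommSemiring R] [CommSemiring A] [Algebra R A]
    [AddCommMonoid M] [Module A M] [Module R M] (s : Finset ι) (f : ι → Derivation R A M)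
    (x : A) : (∑ k ∈ s, f k) x = ∑ k ∈ s, f k x := by
  induction s using Finset.cons_induction <;> simp [*]

section InducedBracket

variable {K : Type u} [Field K] {A : Type v} [Ring A] [Algebra K A]
  {ι : Type*} [Fintype ι] [DecidableEq ι] {An : Type v} [CommRing An] [Algebra K An]
  {Ψ : ∀ (C : Type v) [CommRing C] [Algebra K C],
    (An →ₐ[K] C) ≃ (A →ₐ[K] Matrix ι ι C)}

namespace IsNaturalRepEquiv

theorem derivation_ext (hΨ : IsNaturalRepEquiv Ψ) {M : Type*} [AddCommMonoid M] [Module An M]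
    [Module K M] {E E' : Derivation K An M}
    (h : ∀ (a : A) (i j : ι), E (univRep Ψ a i j) = E' (univRep Ψ a i j)) : E = E' :=
  Derivation.ext_of_adjoin_eq_top _ hΨ.adjoin_univRepEntries <| by
    rintro _ ⟨a, i, j, rfl⟩
    exact h a i j

variable (hΨ : IsNaturalRepEquiv Ψ) (D : DoubleBracket K A)

def entryDerivation (a : A) (i j : ι) : Derivation K An An :=
  hΨ.liftDerivation (D.entryBracket (univRep Ψ) a i j) (D.isDerivationAlong_entryBracket _ a i j)

@[simp]
theorem entryDerivation_univRep (a b : A) (i j u v : ι) :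
    hΨ.entryDerivation D a i j (univRep Ψ b u v) = tensorEntry (univRep Ψ) u j i v (D.br a b) :=
  hΨ.liftDerivation_univRep _ _ b u v

def entryDerivationMatrix : A →ₗ[K] Matrix ι ι (Derivation K An An) where
  toFun a := Matrix.of (hΨ.entryDerivation D a)
  map_add' a a' := Matrix.ext fun i j => hΨ.derivation_ext fun b u v => by simp
  map_smul' c a := Matrix.ext fun i j => hΨ.derivation_ext fun b u v => by simp

theorem isDerivationAlong_entryDerivationMatrix :
    IsDerivationAlong (univRep Ψ) (hΨ.entryDerivationMatrix D) := by
  intro a b i j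
  refine hΨ.derivation_ext fun c s t => ?_
  simp [entryDerivationMatrix, D.leibniz_left, tensorEntry_map_id_mulLeft,
    tensorEntry_map_mulRight_id, Finset.sum_add_distrib, Derivation.sum_apply]

def bracketDerivation : Derivation K An (Derivation K An An) :=
  hΨ.liftDerivation (hΨ.entryDerivationMatrix D) (hΨ.isDerivationAlong_entryDerivationMatrix D)

def inducedBracket : An →ₗ[K] An →ₗ[K] An :=
  LinearMap.mk₂ K (fun α β => hΨ.bracketDerivation D α β)
    (by simp) (by simp) (by simp) (by simp)

theorem isInducedBracket_inducedBracket : D.IsInducedBracket (univRep Ψ) (hΨ.inducedBracket D) :=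
  fun a b i j u v => by simp [inducedBracket, bracketDerivation, entryDerivationMatrix]

theorem inducedBracket_mul_left (α α' β : An) :
    hΨ.inducedBracket D (α * α') β
      = hΨ.inducedBracket D α β * α' + α * hΨ.inducedBracket D α' β := by
  simp [inducedBracket, mul_comm, add_comm]

theorem inducedBracket_mul_right (α β β' : An) :
    hΨ.inducedBracket D α (β * β')
      = hΨ.inducedBracket D α β * β' + β * hΨ.inducedBracket D α β' := by
  simp [inducedBracket, mul_comm, add_comm]

end IsNaturalRepEquiv

end InducedBracket

theorem statement_15_general (K : Type u) [Field K] (A : Type v) [Ring A] [Algebra K A]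
    (D : DoubleBracket K A) (hD : D.IsPoisson)
    (n : ℕ)
    (An : Type v) [CommRing An] [Algebra K An]
    (Ψ : ∀ (C : Type v) [CommRing C] [Algebra K C],
        (An →ₐ[K] C) ≃ (A →ₐ[K] Matrix (Fin n) (Fin n) C))
    (hΨnat : ∀ (C : Type v) [CommRing C] [Algebra K C] (C' : Type v) [CommRing C']
        [Algebra K C'] (h : C →ₐ[K] C') (g : An →ₐ[K] C),
        Ψ C' (h.comp g) = (AlgHom.mapMatrix h).comp (Ψ C g)) :
    (Algebra.adjoin K {x : An |
        ∃ (a : A) (i j : Fin n), x = (Ψ An (AlgHom.id K An)) a i j} = ⊤)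
    ∧ ∃! Pb : An →ₗ[K] An →ₗ[K] An,
        (∀ α β, Pb α β = - Pb β α)
        ∧ (∀ α β γ, Pb α (Pb β γ) = Pb (Pb α β) γ + Pb β (Pb α γ))
        ∧ (∀ α β γ, Pb α (β * γ) = Pb α β * γ + β * Pb α γ)
        ∧ (∀ (a b : A) (i j u' v' : Fin n),
            ∀ T : A ⊗[K] A →ₗ[K] An,
              (∀ p q : A, T (p ⊗ₜ[K] q)
                  = (Ψ An (AlgHom.id K An)) p u' j * (Ψ An (AlgHom.id K An)) q i v') →
              Pb ((Ψ An (AlgHom.id K An)) a i j) ((Ψ An (AlgHom.id K An)) b u' v')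
                = T (D.br a b)) := by
  have hΨ : IsNaturalRepEquiv Ψ := hΨnat
  have hgen : Algebra.adjoin K (univRepEntries Ψ) = ⊤ := hΨ.adjoin_univRepEntries
  have hP := hΨ.isInducedBracket_inducedBracket D
  have hl := hΨ.inducedBracket_mul_left D
  have hr := hΨ.inducedBracket_mul_right D
  have hanti := LinearMap.antisymm_of_adjoin_eq_top hgen hl hr (by
    rintro _ ⟨a, i, j, rfl⟩ _ ⟨b, u, v, rfl⟩
    exact hP.antisymm a b i j u v)
  refine ⟨hgen, hΨ.inducedBracket D,
    ⟨hanti, LinearMap.jacobi_of_adjoin_eq_top hgen hanti hr ?_, hr, ?_⟩, ?_⟩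
  · rintro _ ⟨a, i, j, rfl⟩ _ ⟨b, u, v, rfl⟩ _ ⟨c, s, t, rfl⟩
    exact hP.cyclic_jacobi hr hD a b c i j u v s t
  · intro a b i j u v T hT
    rw [show T = tensorEntry (univRep Ψ) u j i v from TensorProduct.ext' hT]
    exact hP a b i j u v
  · rintro P ⟨hanti', -, hr', hP'⟩
    refine LinearMap.ext_of_leibniz_of_adjoin_eq_top hgen
      (LinearMap.leibniz_left_of_antisymm hanti' hr') hr' hl hr ?_
    rintro _ ⟨a, i, j, rfl⟩ _ ⟨b, u, v, rfl⟩
    exact (hP' a b i j u v _ fun p q => rfl).trans (hP a b i j u v).symm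

/-- Let `(A,⦃-,-⦄)` be a double Poisson algebra and let `Aₙ`
corepresent the `n`-dimensional representation functor, with natural bijections
`Ψ_C : Hom(Aₙ,C) ≃ Hom(A,Mₙ(C))` and universal representation `u = Ψ_{Aₙ}(id)`, writing
`a_{ij} = (u a)_{ij}`. Then (a) `Aₙ` is generated as a `K`-algebra by the `a_{ij}`;
(b) there is a unique Poisson bracket on `Aₙ` (antisymmetric, Jacobi, Leibniz) with
`{a_{ij}, b_{uv}} = T_{u,j,i,v}(⦃a,b⦄)`, where `T_{u,j,i,v} : A⊗A → Aₙ` is the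
`K`-linear map determined by `p⊗q ↦ (u p)_{uj}·(u q)_{iv}`. -/
theorem statement_15 (K : Type u) [Field K] [CharZero K] (A : Type v) [Ring A] [Algebra K A]
    (D : DoubleBracket K A) (hD : D.IsPoisson)
    (n : ℕ) (hn : 0 < n)
    (An : Type v) [CommRing An] [Algebra K An]
    (Ψ : ∀ (C : Type v) [CommRing C] [Algebra K C],
        (An →ₐ[K] C) ≃ (A →ₐ[K] Matrix (Fin n) (Fin n) C))
    (hΨnat : ∀ (C : Type v) [CommRing C] [Algebra K C] (C' : Type v) [CommRing C']
        [Algebra K C'] (h : C →ₐ[K] C') (g : An →ₐ[K] C),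
        Ψ C' (h.comp g) = (AlgHom.mapMatrix h).comp (Ψ C g)) :
    (Algebra.adjoin K {x : An |
        ∃ (a : A) (i j : Fin n), x = (Ψ An (AlgHom.id K An)) a i j} = ⊤)
    ∧ ∃! Pb : An →ₗ[K] An →ₗ[K] An,
        (∀ α β, Pb α β = - Pb β α)
        ∧ (∀ α β γ, Pb α (Pb β γ) = Pb (Pb α β) γ + Pb β (Pb α γ))
        ∧ (∀ α β γ, Pb α (β * γ) = Pb α β * γ + β * Pb α γ)
        ∧ (∀ (a b : A) (i j u' v' : Fin n),
            ∀ T : A ⊗[K] A →ₗ[K] An,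
              (∀ p q : A, T (p ⊗ₜ[K] q)
                  = (Ψ An (AlgHom.id K An)) p u' j * (Ψ An (AlgHom.id K An)) q i v') →
              Pb ((Ψ An (AlgHom.id K An)) a i j) ((Ψ An (AlgHom.id K An)) b u' v')
                = T (D.br a b)) :=
  statement_15_general K A D hD n An Ψ hΨnat
end
end
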